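/- Frontdoor adjustment identity (Theorem 2 of the paper, stated for finitely supported distributions): Let U, T, M, Y be finite nonempty types and suppose the joint probability mass function p on U × T × M × Y factorizes according to the frontdoor causal structure, i.e. there exist nonnegative functions π(u), a(t | u), b(m | t), c(y | m, u), each summing to 1 in its first argument for every fixed value of the remaining arguments, with π(u) > 0, a(t | u) > 0, b(m | t) > 0 and c(y | m, u) > 0 for all arguments, such that p(u, t, m, y) = π(u) · a(t | u) · b(m | t) · c(y | m, u). Fix t : T and define the interventional probability of Y = y under do(T := t) by the truncated factorization over the remaining mechanisms: P(Y = y | do(T := t)) = Σ_u Σ_m π(u) · b(m | t) · c(y | m, u). Then for every y : Y this interventional probability is identified from the observational distribution of (T, M, Y) alone by the frontdoor formula: P(Y = y | do(T := t)) = Σ_m P(M = m | T = t) · Σ_{t'} P(Y = y | M = m, T = t') · P(T = t'), where all probabilities on the right-hand side are marginal and conditional probabilities computed from p (with U summed out). -/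
import Mathlib


/-- **Frontdoor adjustment identity** (Theorem 2, finitely supported case).
Suppose the joint pmf `p` on `U × T × M × Y` factorizes as
`p (u, t, m, y) = π u · a t u · b m t · c y m u` with all factors strictly positive
and normalized in their first argument.  Fix `t` and define the interventional
probability of `Y = y` under `do(T := t)` by the truncated factorization
`P(Y = y | do(T := t)) = ∑_u ∑_m π u · b m t · c y m u`.  Then for every `y` this
interventional probability is identified from the observational distribution of
`(T, M, Y)` by the frontdoor formula:
`P(Y = y | do(T := t)) = ∑_m P(M = m | T = t) · ∑_{t'} P(Y = y | M = m, T = t') · P(T = t')`,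
where the probabilities on the right are marginal/conditional probabilities computed
from `p` with `U` summed out. -/
theorem frontdoor_adjustment
    {U T M Y : Type*} [Fintype U] [Fintype T] [Fintype M] [Fintype Y]
    [Nonempty U] [Nonempty T] [Nonempty M] [Nonempty Y]
    (p : U × T × M × Y → ℝ)
    (π : U → ℝ) (a : T → U → ℝ) (b : M → T → ℝ) (c : Y → M → U → ℝ)
    (hπ_sum : ∑ u : U, π u = 1)
    (ha_sum : ∀ u : U, ∑ t : T, a t u = 1)
    (hb_sum : ∀ t : T, ∑ m : M, b m t = 1)
    (hc_sum : ∀ m : M, ∀ u : U, ∑ y : Y, c y m u = 1)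
    (hπ_pos : ∀ u, 0 < π u)
    (ha_pos : ∀ t u, 0 < a t u)
    (hb_pos : ∀ m t, 0 < b m t)
    (hc_pos : ∀ y m u, 0 < c y m u)
    (hfact : ∀ u t m y, p (u, t, m, y) = π u * a t u * b m t * c y m u)
    (t : T) :
    ∀ y : Y,
      (∑ u : U, ∑ m : M, π u * b m t * c y m u) =
        ∑ m : M,
          ((∑ u : U, ∑ y' : Y, p (u, t, m, y')) /
              (∑ u : U, ∑ m' : M, ∑ y' : Y, p (u, t, m', y'))) *
            ∑ t' : T,
              ((∑ u : U, p (u, t', m, y)) /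
                  (∑ u : U, ∑ y' : Y, p (u, t', m, y'))) *
                (∑ u : U, ∑ m' : M, ∑ y' : Y, p (u, t', m', y')) := by
  intro y
  have hA : ∀ t' : T, 0 < ∑ u : U, π u * a t' u := fun t' =>
    Finset.sum_pos (fun u _ => mul_pos (hπ_pos u) (ha_pos t' u)) Finset.univ_nonempty
  have h1 : ∀ t' m', (∑ u : U, ∑ y' : Y, p (u, t', m', y'))
      = b m' t' * ∑ u : U, π u * a t' u := by
    intro t' m'
    simp only [hfact, ← Finset.mul_sum, hc_sum, mul_one]
    rw [Finset.mul_sum]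
    exact Finset.sum_congr rfl fun u _ => by ring
  have h2 : ∀ t', (∑ u : U, ∑ m' : M, ∑ y' : Y, p (u, t', m', y'))
      = ∑ u : U, π u * a t' u := by
    intro t'
    rw [Finset.sum_comm]
    simp only [h1, ← Finset.sum_mul, hb_sum, one_mul]
  have h3 : ∀ t' m', (∑ u : U, p (u, t', m', y))
      = b m' t' * ∑ u : U, π u * a t' u * c y m' u := by
    intro t' m'
    simp only [hfact, Finset.mul_sum]
    exact Finset.sum_congr rfl fun u _ => by ring
  have hstep : ∀ m', (∑ t' : T,
      ((∑ u : U, p (u, t', m', y)) / (∑ u : U, ∑ y' : Y, p (u, t', m', y'))) *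
        (∑ u : U, ∑ m'' : M, ∑ y' : Y, p (u, t', m'', y')))
      = ∑ u : U, π u * c y m' u := by
    intro m'
    have : ∀ t' : T,
        ((∑ u : U, p (u, t', m', y)) / (∑ u : U, ∑ y' : Y, p (u, t', m', y'))) *
          (∑ u : U, ∑ m'' : M, ∑ y' : Y, p (u, t', m'', y'))
        = ∑ u : U, π u * a t' u * c y m' u := by
      intro t'
      rw [h1, h2, h3, mul_div_mul_left _ _ (hb_pos m' t').ne',
        div_mul_cancel₀ _ (hA t').ne']
    rw [Finset.sum_congr rfl fun t' _ => this t', Finset.sum_comm]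
    refine Finset.sum_congr rfl fun u _ => ?_
    rw [show (∑ t' : T, π u * a t' u * c y m' u) = (∑ t' : T, a t' u) * (π u * c y m' u) by
      rw [Finset.sum_mul]; exact Finset.sum_congr rfl fun t' _ => by ring,
      ha_sum, one_mul]
  calc (∑ u : U, ∑ m : M, π u * b m t * c y m u)
      = ∑ m : M, b m t * ∑ u : U, π u * c y m u := by
        rw [Finset.sum_comm]
        refine Finset.sum_congr rfl fun m _ => ?_
        rw [Finset.mul_sum]
        exact Finset.sum_congr rfl fun u _ => by ring
    _ = _ := by
        refine Finset.sum_congr rfl fun m _ => ?_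
        rw [h1, h2, mul_div_assoc, div_self (hA t).ne', mul_one, hstep]
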